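/- For every monic divisor f ∈ F_q[x] of x^n - 1, the number of additive characters of F_{q^n} with F_q-order equal to f is Φ_q(f) = |(F_q[x]/(f))^×|. -/

import Mathlib

open Polynomial

noncomputable section

/-- The action `g ∘ α = Σ aᵢ α^(qⁱ)` of `F_q[x]` on an extension of `F_q`. -/
def fqAct (F : Type*) [Field F] [Fintype F] {E : Type*} [Field E] [Algebra F E]
    (g : F[X]) (α : E) : E :=
  g.sum fun i a => algebraMap F E a * α ^ (Fintype.card F) ^ i

/-- `m` is the `F_q`-order of `α`: the monic generator of the annihilator of `α`. -/
def IsFqOrder (F : Type*) [Field F] [Fintype F] {E : Type*} [Field E] [Algebra F E]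
    (α : E) (m : F[X]) : Prop :=
  m.Monic ∧ fqAct F m α = 0 ∧ ∀ g : F[X], fqAct F g α = 0 → m ∣ g

/-- `m` is the `F_q`-order of the additive character `χ`: the monic generator of the ideal
of `g` with `g ∘ χ` trivial, where `(g ∘ χ) β = χ (g ∘ β)`. -/
def IsCharFqOrder (F : Type*) [Field F] [Fintype F] {E : Type*} [Field E] [Algebra F E]
    (χ : E → ℂ) (m : F[X]) : Prop :=
  m.Monic ∧ (∀ β : E, χ (fqAct F m β) = 1) ∧
    ∀ g : F[X], (∀ β : E, χ (fqAct F g β) = 1) → m ∣ g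

/-- The monic reciprocal `f*(x) = f(0)⁻¹ x^(deg f) f(1/x)` of a polynomial. -/
def monicRecip {K : Type*} [Field K] (f : K[X]) : K[X] :=
  C (f.coeff 0)⁻¹ * f.reverse

/-- The additive character `χ_a : β ↦ exp(2πi · Tr(aβ)/p)`. -/
def stdChar (p : ℕ) [Fact p.Prime] {E : Type*} [Field E] [Algebra (ZMod p) E]
    (a : E) : E → ℂ :=
  fun β => Complex.exp (2 * Real.pi * Complex.I *
    ((Algebra.trace (ZMod p) E (a * β)).val : ℂ) / p)

/-- `β` is normal over `F_q`: its Frobenius conjugates form an `F_q`-basis. -/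
def IsNormalElem (F : Type*) [Field F] [Fintype F] {E : Type*} [Field E] [Algebra F E]
    (β : E) : Prop :=
  LinearIndependent F (fun i : Fin (Module.finrank F E) => β ^ (Fintype.card F) ^ (i : ℕ)) ∧
  Submodule.span F (Set.range fun i : Fin (Module.finrank F E) => β ^ (Fintype.card F) ^ (i : ℕ)) = ⊤

section Aux
variable (F : Type*) [Field F] [Fintype F] {E : Type*} [Field E] [Algebra F E]

lemma frob_add (x y : E) : (x + y) ^ Fintype.card F = x ^ Fintype.card F + y ^ Fintype.card F := by
  obtain ⟨p, hp⟩ := CharP.exists F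
  haveI := hp
  haveI hp' : Fact p.Prime := ⟨CharP.char_is_prime F p⟩
  obtain ⟨k, _, hcard⟩ := FiniteField.card F p
  haveI : CharP E p := charP_of_injective_algebraMap (algebraMap F E).injective p
  rw [hcard, add_pow_char_pow]

/-- Frobenius as an `F`-linear endomorphism. -/
def frobLin : E →ₗ[F] E where
  toFun x := x ^ Fintype.card F
  map_add' := frob_add F
  map_smul' c x := by
    simp only [Algebra.smul_def, mul_pow, RingHom.id_apply, ← map_pow, FiniteField.pow_card]

lemma frobLin_pow_apply (i : ℕ) (α : E) :
    ((frobLin F (E := E)) ^ i) α = α ^ (Fintype.card F) ^ i := by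
  induction i generalizing α with
  | zero => simp
  | succ i ih =>
    rw [pow_succ, Module.End.mul_apply]
    show ((frobLin F (E := E)) ^ i) (α ^ Fintype.card F) = _
    rw [ih, ← pow_mul, ← pow_succ']

lemma fqAct_eq_aeval (g : F[X]) (α : E) :
    fqAct F g α = Polynomial.aeval (frobLin F (E := E)) g α := by
  rw [fqAct, Polynomial.aeval_def, Polynomial.eval₂_eq_sum, Polynomial.sum, Polynomial.sum,
    LinearMap.coe_sum, Finset.sum_apply]
  refine Finset.sum_congr rfl fun i _ => ?_
  rw [Module.End.mul_apply, Module.algebraMap_end_apply, frobLin_pow_apply, Algebra.smul_def]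

end Aux


section Act
variable (F : Type*) [Field F] [Fintype F] {E : Type*} [Field E] [Algebra F E]

lemma fqAct_mul (g h : F[X]) (α : E) : fqAct F (g * h) α = fqAct F g (fqAct F h α) := by
  simp [fqAct_eq_aeval, map_mul, Module.End.mul_apply]

lemma fqAct_add (g h : F[X]) (α : E) : fqAct F (g + h) α = fqAct F g α + fqAct F h α := by
  simp [fqAct_eq_aeval, map_add]

lemma fqAct_zero (α : E) : fqAct F (0 : F[X]) α = 0 := by simp [fqAct_eq_aeval]

lemma fqAct_add_right (g : F[X]) (α β : E) :
    fqAct F g (α + β) = fqAct F g α + fqAct F g β := by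
  simp [fqAct_eq_aeval, map_add]

variable {n : ℕ}

lemma fqAct_X_pow_sub_one (hrank : Module.finrank F E = n) (hn : 1 ≤ n) (α : E) :
    fqAct F ((X : F[X]) ^ n - 1) α = 0 := by
  have hfd : Module.Finite F E := Module.finite_of_finrank_pos (by omega : 0 < Module.finrank F E)
  have : Finite E := Module.finite_of_finite F
  cases nonempty_fintype E
  have hcard : Fintype.card E = Fintype.card F ^ n := by
    rw [Module.card_eq_pow_finrank (K := F), hrank]
  rw [fqAct_eq_aeval, map_sub, map_pow, map_one, aeval_X, LinearMap.sub_apply,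
    Module.End.one_apply, frobLin_pow_apply, ← hcard, FiniteField.pow_card, sub_self]

end Act

section Ker
variable (F : Type*) [Field F] [Fintype F] {E : Type*} [Field E] [Algebra F E]

/-- The linearized `q`-polynomial associated to `g`. -/
def Qpoly (g : F[X]) : E[X] := g.sum fun i a => C (algebraMap F E a) * X ^ (Fintype.card F) ^ i

lemma Qpoly_eval (g : F[X]) (α : E) : (Qpoly F g (E := E)).eval α = fqAct F g α := by
  rw [Qpoly, fqAct, Polynomial.sum, Polynomial.sum, Polynomial.eval_finset_sum]
  simp

lemma Qpoly_natDegree_le (g : F[X]) :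
    (Qpoly F g (E := E)).natDegree ≤ (Fintype.card F) ^ g.natDegree := by
  refine Polynomial.natDegree_sum_le_of_forall_le _ _ fun i hi => ?_
  have h1 : i ≤ g.natDegree := Polynomial.le_natDegree_of_ne_zero (Polynomial.mem_support_iff.mp hi)
  calc (C (algebraMap F E (g.coeff i)) * X ^ (Fintype.card F) ^ i).natDegree
      ≤ (Fintype.card F) ^ i := by
        refine (Polynomial.natDegree_C_mul_le _ _).trans ?_
        simp [Polynomial.natDegree_X_pow]
    _ ≤ _ := Nat.pow_le_pow_right Fintype.card_pos h1

lemma Qpoly_coeff (g : F[X]) (hg : g.Monic) :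
    (Qpoly F g (E := E)).coeff ((Fintype.card F) ^ g.natDegree) = 1 := by
  have hq : 2 ≤ Fintype.card F := Fintype.one_lt_card
  rw [Qpoly, Polynomial.sum, Polynomial.finset_sum_coeff]
  rw [Finset.sum_eq_single g.natDegree]
  · simp [Polynomial.coeff_C_mul, Polynomial.coeff_X_pow, hg.coeff_natDegree]
  · intro i _ hne
    rw [Polynomial.coeff_C_mul, Polynomial.coeff_X_pow, if_neg, mul_zero]
    exact fun h => hne (Nat.pow_right_injective hq h.symm)
  · intro h
    simp [Polynomial.mem_support_iff, hg.coeff_natDegree] at h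

lemma Qpoly_ne_zero (g : F[X]) (hg : g.Monic) : Qpoly F g (E := E) ≠ 0 := fun h => by
  have := Qpoly_coeff F g hg (E := E)
  rw [h] at this
  simp at this

lemma card_ker_aeval_le [Fintype E] (g : F[X]) (hg : g.Monic) :
    Nat.card (LinearMap.ker (aeval (frobLin F (E := E)) g)) ≤
      Fintype.card F ^ g.natDegree := by
  classical
  set Q := Qpoly F g (E := E) with hQdef
  have hQ : Q ≠ 0 := Qpoly_ne_zero F g hg
  have hsub : ((LinearMap.ker (aeval (frobLin F (E := E)) g) : Set E)) ⊆ ↑Q.roots.toFinset := by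
    intro x hx
    rw [SetLike.mem_coe, LinearMap.mem_ker] at hx
    rw [Finset.mem_coe, Multiset.mem_toFinset, mem_roots hQ]
    rw [IsRoot.def, hQdef, Qpoly_eval, fqAct_eq_aeval, hx]
  calc Nat.card (LinearMap.ker (aeval (frobLin F (E := E)) g))
      = ((LinearMap.ker (aeval (frobLin F (E := E)) g) : Set E)).ncard :=
        Nat.card_coe_set_eq _
    _ ≤ (↑Q.roots.toFinset : Set E).ncard := Set.ncard_le_ncard hsub (Set.toFinite _)
    _ = Q.roots.toFinset.card := Set.ncard_coe_finset _
    _ ≤ Multiset.card Q.roots := Q.roots.toFinset_card_le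
    _ ≤ Q.natDegree := Q.card_roots'
    _ ≤ Fintype.card F ^ g.natDegree := Qpoly_natDegree_le F g

end Ker

section Rank
variable (F : Type*) [Field F] [Fintype F] {E : Type*} [Field E] [Algebra F E]

lemma finrank_ker_aeval_le [Fintype E] (g : F[X]) (hg : g.Monic) :
    Module.finrank F (LinearMap.ker (aeval (frobLin F (E := E)) g)) ≤ g.natDegree := by
  classical
  have h := card_ker_aeval_le F (E := E) g hg
  have h2 : Nat.card (LinearMap.ker (aeval (frobLin F (E := E)) g)) =
      Fintype.card F ^ Module.finrank F (LinearMap.ker (aeval (frobLin F (E := E)) g)) := by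
    haveI : Fintype (LinearMap.ker (aeval (frobLin F (E := E)) g)) := Fintype.ofFinite _
    rw [Nat.card_eq_fintype_card,
      Module.card_eq_pow_finrank (K := F) (V := ↥(LinearMap.ker (aeval (frobLin F (E := E)) g)))]
  rw [h2] at h
  exact (Nat.pow_le_pow_iff_right Fintype.one_lt_card).mp h

variable {n : ℕ}

lemma aeval_frobLin_X_pow_sub_one (hrank : Module.finrank F E = n) (hn : 1 ≤ n) :
    aeval (frobLin F (E := E)) ((X : F[X]) ^ n - 1) = 0 := by
  ext α
  rw [← fqAct_eq_aeval, fqAct_X_pow_sub_one F hrank hn]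
  rfl

lemma finrank_ker_aeval_eq [Fintype E] (hrank : Module.finrank F E = n) (hn : 1 ≤ n)
    {g : F[X]} (hg : g.Monic) (hdvd : g ∣ (X : F[X]) ^ n - 1) :
    Module.finrank F (LinearMap.ker (aeval (frobLin F (E := E)) g)) = g.natDegree := by
  classical
  obtain ⟨h, hfh⟩ := hdvd
  have hXn : ((X : F[X]) ^ n - 1).Monic := by
    simpa using monic_X_pow_sub_C (1 : F) (by omega : n ≠ 0)
  have hh : h.Monic := hg.of_mul_monic_left (hfh ▸ hXn)
  have hdeg : ((X : F[X]) ^ n - 1).natDegree = n := by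
    simpa using natDegree_X_pow_sub_C (n := n) (r := (1 : F))
  have hsum : g.natDegree + h.natDegree = n := by
    rw [← natDegree_mul hg.ne_zero hh.ne_zero, ← hfh, hdeg]
  have hcomp : LinearMap.range (aeval (frobLin F (E := E)) h) ≤
      LinearMap.ker (aeval (frobLin F (E := E)) g) := by
    rintro x ⟨y, rfl⟩
    rw [LinearMap.mem_ker, ← Module.End.mul_apply, ← map_mul, ← hfh,
      aeval_frobLin_X_pow_sub_one F hrank hn]
    simp
  have hrn : Module.finrank F (LinearMap.range (aeval (frobLin F (E := E)) h)) +
      Module.finrank F (LinearMap.ker (aeval (frobLin F (E := E)) h)) = n := by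
    rw [LinearMap.finrank_range_add_finrank_ker, hrank]
  have h1 := finrank_ker_aeval_le F (E := E) h hh
  have h2 := finrank_ker_aeval_le F (E := E) g hg
  have h3 : Module.finrank F (LinearMap.range (aeval (frobLin F (E := E)) h)) ≤
      Module.finrank F (LinearMap.ker (aeval (frobLin F (E := E)) g)) :=
    Submodule.finrank_mono hcomp
  omega

end Rank

section Char
variable {F : Type*} [Field F] {E : Type*} [Field E] [Module F E]

/-- Characters of `E` trivial on a submodule `V` correspond to characters of `E ⧸ V`. -/
def charQuotEquiv (V : Submodule F E) :
    AddChar (E ⧸ V) ℂ ≃ {χ : AddChar E ℂ // ∀ v ∈ V, χ v = 1} where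
  toFun ψ := ⟨ψ.compAddMonoidHom V.mkQ.toAddMonoidHom, fun v hv => by
    have : V.mkQ v = 0 := by
      rw [Submodule.mkQ_apply, Submodule.Quotient.mk_eq_zero]; exact hv
    simp only [AddChar.compAddMonoidHom_apply, LinearMap.toAddMonoidHom_coe, this]
    exact AddChar.map_zero_eq_one ψ⟩
  invFun χp :=
    { toFun := fun x => Quotient.liftOn' x (χp : AddChar E ℂ) (fun a b hab => by
        have h : a - b ∈ V := V.quotientRel_def.mp hab
        have h2 : (χp : AddChar E ℂ) a = χp.1 (a - b) * χp.1 b := by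
          rw [← AddChar.map_add_eq_mul, sub_add_cancel]
        rw [h2, χp.2 _ h, one_mul])
      map_zero_eq_one' := by
        show (χp : AddChar E ℂ) 0 = 1
        exact AddChar.map_zero_eq_one _
      map_add_eq_mul' := fun x y => by
        induction x using Quotient.inductionOn' with
        | h a =>
        induction y using Quotient.inductionOn' with
        | h b =>
        show χp.1 (a + b) = χp.1 a * χp.1 b
        exact AddChar.map_add_eq_mul _ _ _ }
  left_inv ψ := by
    ext x
    induction x using Quotient.inductionOn' with
    | h a => rfl
  right_inv χp := by
    ext a
    rfl

end Char

section CardChar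
variable (F : Type*) [Field F] [Fintype F] {E : Type*} [Field E] [Algebra F E] {n : ℕ}

lemma card_trivial_chars [Fintype E] (hrank : Module.finrank F E = n) (hn : 1 ≤ n)
    {g : F[X]} (hg : g.Monic) (hdvd : g ∣ (X : F[X]) ^ n - 1) :
    Nat.card {χ : AddChar E ℂ // ∀ β : E, χ (fqAct F g β) = 1} =
      Fintype.card F ^ g.natDegree := by
  classical
  set V := LinearMap.range (aeval (frobLin F (E := E)) g) with hV
  have e1 : {χ : AddChar E ℂ // ∀ β : E, χ (fqAct F g β) = 1} ≃
      {χ : AddChar E ℂ // ∀ v ∈ V, χ v = 1} := by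
    refine Equiv.subtypeEquivRight fun χ => ⟨fun h v hv => ?_, fun h β => ?_⟩
    · obtain ⟨β, rfl⟩ := hv
      rw [← fqAct_eq_aeval]
      exact h β
    · exact h _ ⟨β, (fqAct_eq_aeval F g β).symm⟩
  have hXn : ((X : F[X]) ^ n - 1).Monic := by
    simpa using monic_X_pow_sub_C (1 : F) (by omega : n ≠ 0)
  have hdegle : g.natDegree ≤ n := by
    have h := Polynomial.natDegree_le_of_dvd hdvd hXn.ne_zero
    have h2 : ((X : F[X]) ^ n - 1).natDegree = n := by
      simpa using natDegree_X_pow_sub_C (n := n) (r := (1 : F))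
    omega
  have hker : Module.finrank F (LinearMap.ker (aeval (frobLin F (E := E)) g)) = g.natDegree :=
    finrank_ker_aeval_eq F hrank hn hg hdvd
  have hrn : Module.finrank F V + Module.finrank F (LinearMap.ker (aeval (frobLin F (E := E)) g))
      = n := by rw [hV, LinearMap.finrank_range_add_finrank_ker, hrank]
  have hq : Module.finrank F (E ⧸ V) = g.natDegree := by
    have h2 : Module.finrank F (E ⧸ V) + Module.finrank F V = n := by
      rw [Submodule.finrank_quotient_add_finrank, hrank]
    omega
  haveI : Fintype (E ⧸ V) := Fintype.ofFinite _
  calc Nat.card {χ : AddChar E ℂ // ∀ β : E, χ (fqAct F g β) = 1}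
      = Nat.card (AddChar (E ⧸ V) ℂ) := Nat.card_congr (e1.trans (charQuotEquiv V).symm)
    _ = Nat.card (E ⧸ V) := by
        rw [Nat.card_eq_fintype_card, Nat.card_eq_fintype_card, AddChar.card_eq]
    _ = Fintype.card F ^ g.natDegree := by
        rw [Nat.card_eq_fintype_card, Module.card_eq_pow_finrank (K := F) (V := E ⧸ V), hq]

end CardChar

section Order
variable (F : Type*) [Field F]

/-- In `F[X]`, every nonzero ideal has a monic generator. -/
lemma exists_monic_generator (I : Ideal F[X]) {f : F[X]} (hf : f ∈ I) (h0 : f ≠ 0) :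
    ∃ m : F[X], m.Monic ∧ (∀ g, g ∈ I ↔ m ∣ g) := by
  haveI : I.IsPrincipal := IsPrincipalIdealRing.principal I
  set g₀ := Submodule.IsPrincipal.generator I with hg₀
  have hmem : ∀ g, g ∈ I ↔ g₀ ∣ g := by
    intro g
    rw [← Ideal.span_singleton_generator I, Ideal.mem_span_singleton]
  have hg0 : g₀ ≠ 0 := by
    intro h
    rw [hmem, h] at hf
    exact h0 (zero_dvd_iff.mp hf)
  refine ⟨g₀ * C (g₀.leadingCoeff)⁻¹, monic_mul_leadingCoeff_inv hg0, fun g => ?_⟩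
  rw [hmem]
  constructor
  · rintro ⟨c, rfl⟩
    exact ⟨C g₀.leadingCoeff * c, by
      rw [mul_assoc, ← mul_assoc (C (g₀.leadingCoeff)⁻¹), ← C_mul,
        inv_mul_cancel₀ (leadingCoeff_ne_zero.mpr hg0), C_1, one_mul]⟩
  · rintro ⟨c, rfl⟩
    exact ⟨C (g₀.leadingCoeff)⁻¹ * c, by ring⟩

variable [Fintype F] {E : Type*} [Field E] [Algebra F E] {n : ℕ}

/-- The annihilator ideal of an additive character. -/
def annIdealChar (χ : AddChar E ℂ) : Ideal F[X] where
  carrier := {g | ∀ β : E, χ (fqAct F g β) = 1}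
  zero_mem' := fun β => by rw [fqAct_zero]; exact AddChar.map_zero_eq_one χ
  add_mem' := fun {a b} ha hb β => by
    rw [fqAct_add, AddChar.map_add_eq_mul, ha β, hb β, one_mul]
  smul_mem' := fun c g hg => fun β => by
    rw [smul_eq_mul, mul_comm, fqAct_mul]
    exact hg _

lemma exists_charOrder (hrank : Module.finrank F E = n) (hn : 1 ≤ n) (χ : AddChar E ℂ) :
    ∃ m : F[X], IsCharFqOrder F (⇑χ) m ∧ m ∣ (X : F[X]) ^ n - 1 := by
  have hXmem : ((X : F[X]) ^ n - 1) ∈ annIdealChar F χ := fun β => by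
    show χ (fqAct F ((X : F[X]) ^ n - 1) β) = 1
    rw [fqAct_X_pow_sub_one F hrank hn]
    exact AddChar.map_zero_eq_one χ
  have hX0 : ((X : F[X]) ^ n - 1) ≠ 0 := by
    have : ((X : F[X]) ^ n - 1).Monic := by
      simpa using monic_X_pow_sub_C (1 : F) (by omega : n ≠ 0)
    exact this.ne_zero
  obtain ⟨m, hm, hiff⟩ := exists_monic_generator F (annIdealChar F χ) hXmem hX0
  exact ⟨m, ⟨hm, (hiff m).mpr dvd_rfl, fun g hg => (hiff g).mp hg⟩, (hiff _).mp hXmem⟩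

lemma charOrder_unique {χ : E → ℂ} {m₁ m₂ : F[X]} (h1 : IsCharFqOrder F χ m₁)
    (h2 : IsCharFqOrder F χ m₂) : m₁ = m₂ :=
  eq_of_monic_of_associated h1.1 h2.1
    (associated_of_dvd_dvd (h1.2.2 _ h2.2.1) (h2.2.2 _ h1.2.1))

lemma charOrder_dvd_trivial {χ : AddChar E ℂ} {m g : F[X]} (h : IsCharFqOrder F (⇑χ) m)
    (hdvd : m ∣ g) : ∀ β : E, χ (fqAct F g β) = 1 := by
  obtain ⟨c, rfl⟩ := hdvd
  intro β
  rw [fqAct_mul]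
  exact h.2.1 _

end Order

section Quot
variable {F : Type*} [Field F]

/-- `d` is the order of `a` in `F[X]⧸(f)`. -/
def IsQuotOrder (f : F[X]) (a : F[X] ⧸ Ideal.span {f}) (d : F[X]) : Prop :=
  d.Monic ∧ Ideal.Quotient.mk (Ideal.span {f}) d * a = 0 ∧
    ∀ g : F[X], Ideal.Quotient.mk (Ideal.span {f}) g * a = 0 → d ∣ g

/-- The annihilator ideal of `a` in `F[X]⧸(f)`. -/
def annIdealQuot (f : F[X]) (a : F[X] ⧸ Ideal.span {f}) : Ideal F[X] where
  carrier := {g | Ideal.Quotient.mk (Ideal.span {f}) g * a = 0}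
  zero_mem' := by simp
  add_mem' := fun {u v} hu hv => by
    show Ideal.Quotient.mk (Ideal.span {f}) (u + v) * a = 0
    rw [map_add, add_mul, hu, hv, add_zero]
  smul_mem' := fun c g hg => by
    show Ideal.Quotient.mk (Ideal.span {f}) (c * g) * a = 0
    rw [map_mul, mul_assoc, hg, mul_zero]

lemma exists_quotOrder {f : F[X]} (hf : f ≠ 0) (a : F[X] ⧸ Ideal.span {f}) :
    ∃ d : F[X], IsQuotOrder f a d ∧ d ∣ f := by
  have hfmem : f ∈ annIdealQuot f a := by
    show Ideal.Quotient.mk (Ideal.span {f}) f * a = 0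
    rw [Ideal.Quotient.eq_zero_iff_mem.mpr (Ideal.mem_span_singleton_self f), zero_mul]
  obtain ⟨m, hm, hiff⟩ := exists_monic_generator F (annIdealQuot f a) hfmem hf
  exact ⟨m, ⟨hm, (hiff m).mpr dvd_rfl, fun g hg => (hiff g).mp hg⟩, (hiff f).mp hfmem⟩

lemma quotOrder_unique {f : F[X]} {a : F[X] ⧸ Ideal.span {f}} {d₁ d₂ : F[X]}
    (h1 : IsQuotOrder f a d₁) (h2 : IsQuotOrder f a d₂) : d₁ = d₂ :=
  eq_of_monic_of_associated h1.1 h2.1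
    (associated_of_dvd_dvd (h1.2.2 _ h2.2.1) (h2.2.2 _ h1.2.1))

lemma isUnit_quot_iff {d : F[X]} (w : F[X]) :
    IsUnit (Ideal.Quotient.mk (Ideal.span {d}) w) ↔ IsCoprime w d := by
  constructor
  · intro h
    obtain ⟨b, hb⟩ := h.exists_right_inv
    obtain ⟨v, rfl⟩ := Ideal.Quotient.mk_surjective b
    rw [← map_mul, ← map_one (Ideal.Quotient.mk (Ideal.span {d})),
      Ideal.Quotient.eq, Ideal.mem_span_singleton] at hb
    obtain ⟨c, hc⟩ := hb
    exact ⟨v, -c, by rw [mul_comm v w]; linear_combination hc⟩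
  · rintro ⟨u, v, huv⟩
    refine IsUnit.of_mul_eq_one (Ideal.Quotient.mk _ u) ?_
    rw [← map_mul, ← map_one (Ideal.Quotient.mk (Ideal.span {d})), Ideal.Quotient.eq,
      Ideal.mem_span_singleton]
    exact ⟨-v, by linear_combination huv⟩

end Quot

section QuotCard
variable {F : Type*} [Field F]

/-- Units of a monoid are equivalent to the subtype of unit elements. -/
def unitsEquivIsUnit (M : Type*) [CommMonoid M] : Mˣ ≃ {x : M // IsUnit x} where
  toFun u := ⟨u, u.isUnit⟩
  invFun x := x.2.unit
  left_inv u := Units.ext (IsUnit.unit_spec _)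
  right_inv x := Subtype.ext x.2.unit_spec

lemma card_isQuotOrder {d h : F[X]} (hd : d.Monic) (hh : h.Monic) :
    Nat.card {a : F[X] ⧸ Ideal.span {d * h} // IsQuotOrder (d * h) a d} =
      Nat.card (F[X] ⧸ Ideal.span {d})ˣ := by
  classical
  have hd0 : d ≠ 0 := hd.ne_zero
  have hh0 : h ≠ 0 := hh.ne_zero
  have hle : Ideal.span {d} ≤
      Submodule.comap (LinearMap.mulLeft F[X] h) (Ideal.span {d * h}) := by
    intro x hx
    rw [Ideal.mem_span_singleton] at hx
    obtain ⟨c, rfl⟩ := hx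
    rw [Submodule.mem_comap, LinearMap.mulLeft_apply, Ideal.mem_span_singleton]
    exact ⟨c, by ring⟩
  set μ : (F[X] ⧸ Ideal.span {d}) →ₗ[F[X]] (F[X] ⧸ Ideal.span {d * h}) :=
    Submodule.mapQ (Ideal.span {d}) (Ideal.span {d * h}) (LinearMap.mulLeft F[X] h) hle with hμ
  have hμapp : ∀ g : F[X], μ (Ideal.Quotient.mk (Ideal.span {d}) g) =
      Ideal.Quotient.mk (Ideal.span {d * h}) (h * g) := fun g => by
    rw [hμ, ← Ideal.Quotient.mk_eq_mk, ← Ideal.Quotient.mk_eq_mk, Submodule.mapQ_apply,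
      LinearMap.mulLeft_apply]
  have hμinj : Function.Injective μ := by
    rw [← LinearMap.ker_eq_bot]
    rw [Submodule.eq_bot_iff]
    intro x hx
    obtain ⟨g, rfl⟩ := Ideal.Quotient.mk_surjective x
    rw [LinearMap.mem_ker, hμapp, Ideal.Quotient.eq_zero_iff_mem, Ideal.mem_span_singleton] at hx
    rw [Ideal.Quotient.eq_zero_iff_mem, Ideal.mem_span_singleton]
    rw [mul_comm d h] at hx
    exact (mul_dvd_mul_iff_left hh0).mp hx
  -- order condition on the image
  have hkey : ∀ w : F[X], IsQuotOrder (d * h) (Ideal.Quotient.mk (Ideal.span {d * h}) (h * w)) d ↔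
      IsCoprime w d := by
    intro w
    constructor
    · rintro ⟨-, -, hmin⟩
      set e := EuclideanDomain.gcd w d with he
      obtain ⟨w', hw'⟩ : e ∣ w := EuclideanDomain.gcd_dvd_left w d
      obtain ⟨d', hdd'⟩ : e ∣ d := EuclideanDomain.gcd_dvd_right w d
      have hann : Ideal.Quotient.mk (Ideal.span {d * h}) d' *
          Ideal.Quotient.mk (Ideal.span {d * h}) (h * w) = 0 := by
        rw [← map_mul, Ideal.Quotient.eq_zero_iff_mem, Ideal.mem_span_singleton]
        exact ⟨w', by rw [hdd', hw']; ring⟩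
      have hdd : d ∣ d' := hmin d' (by rw [← hann, map_mul])
      have hd'0 : d' ≠ 0 := fun h0 => hd0 (by rw [hdd', h0, mul_zero])
      have : IsUnit e := by
        obtain ⟨c, hc⟩ := hdd
        have : d' * 1 = d' * (e * c) := by rw [mul_one, ← mul_assoc, mul_comm d' e, ← hdd', ← hc]
        exact IsUnit.of_mul_eq_one _ (mul_left_cancel₀ hd'0 this).symm
      exact EuclideanDomain.gcd_isUnit_iff.mp (he ▸ this)
    · intro hco
      refine ⟨hd, ?_, ?_⟩
      · rw [← map_mul, Ideal.Quotient.eq_zero_iff_mem, Ideal.mem_span_singleton]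
        exact ⟨w, by ring⟩
      · intro g hg
        rw [← map_mul, Ideal.Quotient.eq_zero_iff_mem, Ideal.mem_span_singleton] at hg
        obtain ⟨c, hc⟩ := hg
        have hdgw : d ∣ g * w := by
          refine (mul_dvd_mul_iff_left hh0).mp ?_
          exact ⟨c, by linear_combination hc⟩
        exact hco.symm.dvd_of_dvd_mul_right hdgw
  -- the bijection
  have hbij : Function.Bijective
      (fun w : {x : F[X] ⧸ Ideal.span {d} // IsUnit x} =>
        (⟨μ w.1, by
          obtain ⟨g, hg⟩ := Ideal.Quotient.mk_surjective w.1
          have := w.2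
          rw [← hg] at this ⊢
          rw [hμapp]
          exact (hkey g).mpr ((isUnit_quot_iff g).mp this)⟩ :
          {a : F[X] ⧸ Ideal.span {d * h} // IsQuotOrder (d * h) a d})) := by
    constructor
    · intro w₁ w₂ hw
      exact Subtype.ext (hμinj (congrArg Subtype.val hw))
    · rintro ⟨a, ha⟩
      obtain ⟨g, rfl⟩ := Ideal.Quotient.mk_surjective a
      have hfdg : d * h ∣ d * g := by
        have := ha.2.1
        rwa [← map_mul, Ideal.Quotient.eq_zero_iff_mem, Ideal.mem_span_singleton] at this
      have hhg : h ∣ g := by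
        obtain ⟨c, hc⟩ := hfdg
        exact ⟨c, mul_left_cancel₀ hd0 (by linear_combination hc)⟩
      obtain ⟨w, rfl⟩ := hhg
      have hw : IsCoprime w d := (hkey w).mp ha
      exact ⟨⟨Ideal.Quotient.mk _ w, (isUnit_quot_iff w).mpr hw⟩, Subtype.ext (hμapp w)⟩
  calc Nat.card {a : F[X] ⧸ Ideal.span {d * h} // IsQuotOrder (d * h) a d}
      = Nat.card {x : F[X] ⧸ Ideal.span {d} // IsUnit x} :=
        (Nat.card_congr (Equiv.ofBijective _ hbij)).symm
    _ = Nat.card (F[X] ⧸ Ideal.span {d})ˣ :=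
        (Nat.card_congr (unitsEquivIsUnit (F[X] ⧸ Ideal.span {d}))).symm

end QuotCard

section Divisors
variable {F : Type*} [Field F]

/-- The finset of monic divisors of a nonzero polynomial. -/
def monicDivisors (f : F[X]) (hf : f ≠ 0) : Finset F[X] :=
  haveI : Finite {d : F[X] // d.Monic ∧ d ∣ f} :=
    @Finite.of_fintype _ (Polynomial.fintypeSubtypeMonicDvd f hf)
  haveI : Finite ↥{d : F[X] | d.Monic ∧ d ∣ f} := this
  (Set.toFinite {d : F[X] | d.Monic ∧ d ∣ f}).toFinset

lemma mem_monicDivisors {f : F[X]} (hf : f ≠ 0) (d : F[X]) :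
    d ∈ monicDivisors f hf ↔ d.Monic ∧ d ∣ f := by
  simp [monicDivisors]

lemma self_mem_monicDivisors {f : F[X]} (hf : f.Monic) :
    f ∈ monicDivisors f hf.ne_zero := (mem_monicDivisors hf.ne_zero f).mpr ⟨hf, dvd_rfl⟩

variable [Fintype F]

lemma card_quot {f : F[X]} (hf : f ≠ 0) :
    Nat.card (F[X] ⧸ Ideal.span {f}) = Fintype.card F ^ f.natDegree := by
  classical
  let pb := AdjoinRoot.powerBasis (K := F) (f := f) hf
  haveI : Module.Finite F (AdjoinRoot f) := Module.Finite.of_basis pb.basis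
  haveI : Finite (AdjoinRoot f) := Module.finite_of_finite F
  haveI : Fintype (AdjoinRoot f) := Fintype.ofFinite _
  have h1 : Nat.card (AdjoinRoot f) =
      Fintype.card F ^ Module.finrank F (AdjoinRoot f) := by
    rw [Nat.card_eq_fintype_card, Module.card_eq_pow_finrank (K := F)]
  have h2 : Module.finrank F (AdjoinRoot f) = f.natDegree := by
    rw [pb.finrank, AdjoinRoot.powerBasis_dim]
  rw [h2] at h1
  exact h1

/-- The order of an element of `F[X]⧸(f)`. -/
def quotOrd {f : F[X]} (hf : f ≠ 0) (a : F[X] ⧸ Ideal.span {f}) : F[X] :=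
  (exists_quotOrder hf a).choose

lemma quotOrd_spec {f : F[X]} (hf : f ≠ 0) (a : F[X] ⧸ Ideal.span {f}) :
    IsQuotOrder f a (quotOrd hf a) ∧ quotOrd hf a ∣ f :=
  (exists_quotOrder hf a).choose_spec

lemma quot_partition {f : F[X]} (hf : f.Monic) :
    Nat.card (F[X] ⧸ Ideal.span {f}) =
      ∑ d ∈ monicDivisors f hf.ne_zero,
        Nat.card {a : F[X] ⧸ Ideal.span {f} // IsQuotOrder f a d} := by
  classical
  haveI : Module.Finite F (AdjoinRoot f) :=
    Module.Finite.of_basis (AdjoinRoot.powerBasis (K := F) hf.ne_zero).basis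
  haveI hfin : Finite (AdjoinRoot f) := Module.finite_of_finite F
  haveI : Finite (F[X] ⧸ Ideal.span {f}) := hfin
  haveI : Fintype (F[X] ⧸ Ideal.span {f}) := Fintype.ofFinite _
  rw [Nat.card_eq_fintype_card, ← Finset.card_univ]
  rw [Finset.card_eq_sum_card_fiberwise (f := fun a => quotOrd hf.ne_zero a)
    (t := monicDivisors f hf.ne_zero) (fun a _ => (mem_monicDivisors hf.ne_zero _).mpr
      ⟨((quotOrd_spec hf.ne_zero a).1).1, (quotOrd_spec hf.ne_zero a).2⟩)]
  refine Finset.sum_congr rfl fun d _ => ?_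
  rw [Nat.card_eq_fintype_card, Fintype.card_subtype]
  congr 1
  ext a
  simp only [Finset.mem_filter, Finset.mem_univ, true_and]
  constructor
  · rintro rfl
    exact (quotOrd_spec hf.ne_zero a).1
  · intro h
    exact quotOrder_unique (quotOrd_spec hf.ne_zero a).1 h

end Divisors

section CharPartition
variable (F : Type*) [Field F] [Fintype F] {E : Type*} [Field E] [Algebra F E] {n : ℕ}

/-- The order of an additive character. -/
def charOrd (hrank : Module.finrank F E = n) (hn : 1 ≤ n) (χ : AddChar E ℂ) : F[X] :=
  (exists_charOrder F hrank hn χ).choose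

lemma charOrd_spec (hrank : Module.finrank F E = n) (hn : 1 ≤ n) (χ : AddChar E ℂ) :
    IsCharFqOrder F (⇑χ) (charOrd F hrank hn χ) ∧ charOrd F hrank hn χ ∣ (X : F[X]) ^ n - 1 :=
  (exists_charOrder F hrank hn χ).choose_spec

lemma char_partition [Fintype E] (hrank : Module.finrank F E = n) (hn : 1 ≤ n)
    {f : F[X]} (hf : f.Monic) (hdvd : f ∣ (X : F[X]) ^ n - 1) :
    Fintype.card F ^ f.natDegree =
      ∑ d ∈ monicDivisors f hf.ne_zero,
        Nat.card {χ : AddChar E ℂ // IsCharFqOrder F (⇑χ) d} := by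
  classical
  rw [← card_trivial_chars F hrank hn hf hdvd]
  rw [Nat.card_eq_fintype_card, Fintype.card_subtype]
  rw [Finset.card_eq_sum_card_fiberwise (f := fun χ => charOrd F hrank hn χ)
    (t := monicDivisors f hf.ne_zero) (fun χ hχ => by
      rw [Finset.mem_coe, Finset.mem_filter] at hχ
      exact (mem_monicDivisors hf.ne_zero _).mpr
        ⟨(charOrd_spec F hrank hn χ).1.1, (charOrd_spec F hrank hn χ).1.2.2 f hχ.2⟩)]
  refine Finset.sum_congr rfl fun d hd => ?_
  rw [Nat.card_eq_fintype_card, Fintype.card_subtype]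
  congr 1
  ext χ
  simp only [Finset.mem_filter, Finset.mem_univ, true_and]
  constructor
  · rintro ⟨h1, rfl⟩
    exact (charOrd_spec F hrank hn χ).1
  · intro h
    obtain ⟨hdm, hddvd⟩ := (mem_monicDivisors hf.ne_zero d).mp hd
    refine ⟨charOrder_dvd_trivial F h hddvd, charOrder_unique F (charOrd_spec F hrank hn χ).1 h⟩

end CharPartition

section Main
variable (F : Type*) [Field F] [Fintype F] {E : Type*} [Field E] [Algebra F E] {n : ℕ}

lemma main_count [Fintype E] (hrank : Module.finrank F E = n) (hn : 1 ≤ n) :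
    ∀ k : ℕ, ∀ f : F[X], f.natDegree = k → f.Monic → f ∣ (X : F[X]) ^ n - 1 →
      Nat.card {χ : AddChar E ℂ // IsCharFqOrder F (⇑χ) f} =
        Nat.card (F[X] ⧸ Ideal.span {f})ˣ := by
  intro k
  induction k using Nat.strong_induction_on with
  | _ k IH =>
  intro f hdeg hf hdvd
  classical
  have hD := char_partition F (E := E) hrank hn hf hdvd
  have hQ : Fintype.card F ^ f.natDegree =
      ∑ d ∈ monicDivisors f hf.ne_zero, Nat.card (F[X] ⧸ Ideal.span {d})ˣ := by
    rw [← card_quot hf.ne_zero, quot_partition hf]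
    refine Finset.sum_congr rfl fun d hd => ?_
    obtain ⟨hdm, hddvd⟩ := (mem_monicDivisors hf.ne_zero d).mp hd
    obtain ⟨g, hfg⟩ := hddvd
    have hg : g.Monic := hdm.of_mul_monic_left (hfg ▸ hf)
    rw [hfg]
    exact card_isQuotOrder hdm hg
  have hfmem := self_mem_monicDivisors hf
  rw [← Finset.add_sum_erase _ _ hfmem] at hD hQ
  have hsame : ∑ d ∈ (monicDivisors f hf.ne_zero).erase f,
      Nat.card {χ : AddChar E ℂ // IsCharFqOrder F (⇑χ) d} =
      ∑ d ∈ (monicDivisors f hf.ne_zero).erase f,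
        Nat.card (F[X] ⧸ Ideal.span {d})ˣ := by
    refine Finset.sum_congr rfl fun d hd => ?_
    obtain ⟨hne, hdD⟩ := Finset.mem_erase.mp hd
    obtain ⟨hdm, hddvd⟩ := (mem_monicDivisors hf.ne_zero d).mp hdD
    have hlt : d.natDegree < k := by
      obtain ⟨g, hfg⟩ := hddvd
      have hg : g.Monic := hdm.of_mul_monic_left (hfg ▸ hf)
      have hg0 : g.natDegree ≠ 0 := fun h0 => hne (by
        rw [hfg, hg.natDegree_eq_zero.mp h0, mul_one])
      have hdeg2 : d.natDegree + g.natDegree = f.natDegree := by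
        rw [hfg, natDegree_mul hdm.ne_zero hg.ne_zero]
      omega
    exact IH _ hlt d rfl hdm (hddvd.trans hdvd)
  rw [hsame] at hD
  exact Nat.add_right_cancel (hD.symm.trans hQ)

theorem card_charFqOrder_eq_totient'
    (E : Type*) [Field E] [Algebra F E]
    (n : ℕ) (hn : 1 ≤ n) (hrank : Module.finrank F E = n)
    (f : F[X]) (hf : f.Monic) (hdvd : f ∣ X ^ n - 1) :
    Nat.card {χ : AddChar E ℂ // IsCharFqOrder F (⇑χ) f} =
      Nat.card (F[X] ⧸ Ideal.span {f})ˣ := by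
  haveI : Module.Finite F E :=
    Module.finite_of_finrank_pos (by omega : 0 < Module.finrank F E)
  haveI : Finite E := Module.finite_of_finite F
  haveI : Fintype E := Fintype.ofFinite _
  exact main_count F hrank hn f.natDegree f rfl hf hdvd

end Main

theorem card_charFqOrder_eq_totient
    (F : Type*) [Field F] [Fintype F] (E : Type*) [Field E] [Algebra F E]
    (n : ℕ) (hn : 1 ≤ n) (hrank : Module.finrank F E = n)
    (f : F[X]) (hf : f.Monic) (hdvd : f ∣ X ^ n - 1) :
    Nat.card {χ : AddChar E ℂ // IsCharFqOrder F (⇑χ) f} =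
      Nat.card (F[X] ⧸ Ideal.span {f})ˣ := by
  exact card_charFqOrder_eq_totient' F E n hn hrank f hf hdvd
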